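/- For μ ∈ [0,1/2] and p ∈ [0,1] and k ≥ 2, the partial derivative of D(k,μ,p) := (1-(1-μp)^k)/(2k) + p/2 - (1-μ)p(1-μp)^{k-1}/2 - μp with respect to p equals ( μp(k-1)(1-μ)(1-μp)^{k-2} + (1-2μ)(1-(1-μp)^{k-1}) )/2, and this expression is nonnegative. -/

import Mathlib

-- The paper's `D(k, μ, q)`.
noncomputable def starMatchingGap (k : ℕ) (μ q : ℝ) : ℝ :=
  (1 - (1 - μ * q) ^ k) / (2 * k) + q / 2 - (1 - μ) * q * (1 - μ * q) ^ (k - 1) / 2 - μ * q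

noncomputable def starMatchingGapDeriv (k : ℕ) (μ p : ℝ) : ℝ :=
  (μ * p * ((k : ℝ) - 1) * (1 - μ) * (1 - μ * p) ^ (k - 2)
    + (1 - 2 * μ) * (1 - (1 - μ * p) ^ (k - 1))) / 2

theorem hasDerivAt_starMatchingGap {k : ℕ} (hk : 1 ≤ k) (μ p : ℝ) :
    HasDerivAt (starMatchingGap k μ) (starMatchingGapDeriv k μ p) p := by
  obtain ⟨n, rfl⟩ := Nat.exists_eq_add_of_le' hk
  have hbase : HasDerivAt (fun q : ℝ => 1 - μ * q) (-μ) p := by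
    simpa using ((hasDerivAt_id p).const_mul μ).const_sub 1
  have hgap := ((((hasDerivAt_const p (1 : ℝ)).sub (hbase.pow (n + 1))).div_const
      (2 * ((n + 1 : ℕ) : ℝ))).add ((hasDerivAt_id p).div_const 2)).sub
      ((((hasDerivAt_id p).const_mul (1 - μ)).mul (hbase.pow n)).div_const 2) |>.sub
      ((hasDerivAt_id p).const_mul μ)
  refine hgap.congr_deriv ?_
  rw [starMatchingGapDeriv, show n + 1 - 2 = n - 1 by omega, Nat.add_sub_cancel]
  simp only [id_eq, Pi.pow_apply]
  push_cast
  field_simp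
  ring

theorem starMatchingGapDeriv_nonneg {k : ℕ} (hk : 1 ≤ k) {μ p : ℝ} (hμ0 : 0 ≤ μ)
    (hμ1 : μ ≤ 1 / 2) (hp0 : 0 ≤ p) (hp1 : p ≤ 1) : 0 ≤ starMatchingGapDeriv k μ p := by
  have hμp0 : 0 ≤ μ * p := mul_nonneg hμ0 hp0
  have hμp1 : μ * p ≤ 1 := mul_le_one₀ (by linarith) hp0 hp1
  have hk1 : (0 : ℝ) ≤ k - 1 := by
    rw [sub_nonneg]
    exact_mod_cast hk
  have hpow : (1 - μ * p) ^ (k - 1) ≤ 1 := pow_le_one₀ (by linarith) (by linarith)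
  have hstar : 0 ≤ μ * p * ((k : ℝ) - 1) * (1 - μ) * (1 - μ * p) ^ (k - 2) :=
    mul_nonneg (mul_nonneg (mul_nonneg hμp0 hk1) (by linarith)) (pow_nonneg (by linarith) _)
  have hmatching : 0 ≤ (1 - 2 * μ) * (1 - (1 - μ * p) ^ (k - 1)) :=
    mul_nonneg (by linarith) (sub_nonneg.mpr hpow)
  exact div_nonneg (add_nonneg hstar hmatching) zero_le_two

theorem D_deriv (μ p : ℝ) (hμ0 : 0 ≤ μ) (hμ1 : μ ≤ 1 / 2)
    (hp0 : 0 ≤ p) (hp1 : p ≤ 1) (k : ℕ) (hk : 2 ≤ k) :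
    HasDerivAt (fun q : ℝ => (1 - (1 - μ * q) ^ k) / (2 * k) + q / 2
        - (1 - μ) * q * (1 - μ * q) ^ (k - 1) / 2 - μ * q)
      ((μ * p * ((k : ℝ) - 1) * (1 - μ) * (1 - μ * p) ^ (k - 2)
        + (1 - 2 * μ) * (1 - (1 - μ * p) ^ (k - 1))) / 2) p ∧
    0 ≤ (μ * p * ((k : ℝ) - 1) * (1 - μ) * (1 - μ * p) ^ (k - 2)
        + (1 - 2 * μ) * (1 - (1 - μ * p) ^ (k - 1))) / 2 :=
  ⟨hasDerivAt_starMatchingGap (by omega) μ p,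
    starMatchingGapDeriv_nonneg (by omega) hμ0 hμ1 hp0 hp1⟩
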